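/- arXiv:1409.5949 — 7 statements merged into one kernel-verified Lean document; each statement's English description precedes it below -/
import Mathlib

section
/- Let R be a prime ring with a derivation d such that d(x)y + x d(y) = d(x) d(y) for all x, y in R (the case n = 1 of the identity (d(xy))^n = d(x)^n d(y)^n). Then d = 0 or R is commutative. -/
/-!
Expanding `d x * d (y * z)` once by the identity and once by the Leibniz rule gives
`(x - d x) * y * d z = 0` for all `x, y, z`. In a prime ring this forces `d = 0` or
`d x = x` for every `x`; in the latter case the identity reads `x * y + x * y = x * y`,
so all products vanish and `R` is commutative.
-/

section
variable {R : Type*} [Ring R] {d : R → R}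

theorem sub_map_mul_mul_map_eq_zero (hleib : ∀ x y : R, d (x * y) = d x * y + x * d y)
    (hid : ∀ x y : R, d x * y + x * d y = d x * d y) (x y z : R) :
    (x - d x) * y * d z = 0 := by
  have h := hid x (y * z)
  have hxy : d x * (y * z) + x * (d y * z) = d x * (d y * z) := by
    rw [← mul_assoc, ← mul_assoc, ← mul_assoc, ← add_mul, hid]
  rw [hleib, mul_add, mul_add, ← add_assoc, hxy] at h
  rw [sub_mul, sub_mul, mul_assoc, mul_assoc, add_left_cancel h, sub_self]

theorem eq_zero_or_eq_self_of_prime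
    (hprime : ∀ a b : R, (∀ r : R, a * r * b = 0) → a = 0 ∨ b = 0)
    (hleib : ∀ x y : R, d (x * y) = d x * y + x * d y)
    (hid : ∀ x y : R, d x * y + x * d y = d x * d y) :
    (∀ x : R, d x = 0) ∨ (∀ x : R, d x = x) := by
  refine or_iff_not_imp_left.mpr fun hd x => ?_
  obtain ⟨z, hz⟩ := not_forall.mp hd
  have := hprime (x - d x) (d z) fun r => sub_map_mul_mul_map_eq_zero hleib hid x r z
  exact (sub_eq_zero.mp (this.resolve_right hz)).symm

end

theorem stmt_2_general {R : Type*} [Ring R]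
    (hprime : ∀ a b : R, (∀ r : R, a * r * b = 0) → a = 0 ∨ b = 0)
    (d : R → R)
    (hleib : ∀ x y : R, d (x * y) = d x * y + x * d y)
    (hid : ∀ x y : R, d x * y + x * d y = d x * d y) :
    (∀ x : R, d x = 0) ∨ (∀ x y : R, x * y = y * x) := by
  refine (eq_zero_or_eq_self_of_prime hprime hleib hid).imp_right fun hself x y => ?_
  have hzero : ∀ a b : R, a * b = 0 := fun a b => by simpa [hself] using hid a b
  rw [hzero, hzero]

theorem stmt_2 {R : Type*} [Ring R]
    (hprime : ∀ a b : R, (∀ r : R, a * r * b = 0) → a = 0 ∨ b = 0)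
    (d : R → R) (hadd : ∀ x y : R, d (x + y) = d x + d y)
    (hleib : ∀ x y : R, d (x * y) = d x * y + x * d y)
    (hid : ∀ x y : R, d x * y + x * d y = d x * d y) :
    (∀ x : R, d x = 0) ∨ (∀ x y : R, x * y = y * x) :=
  stmt_2_general hprime d hleib hid
end

section
/- Let R be a semiprime ring and d a derivation of R such that d(r)[x, y] = 0 for all r, x, y in R. Then [x, d(r)] = 0 for all x, r in R, i.e., d maps R into its center. -/
/-!
An element `a` that kills every commutator from the left also kills the left ideal they generate,
because `t [x, y] = [t, [x, y]] + [x, y] t`. For `c = [x, a]` this gives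
`c t c = x (a (t c)) - a ((x t) c) = 0` for all `t`, hence `c = 0` by semiprimeness.
-/

section

variable {R : Type*} [Ring R] {a : R}

theorem mul_mul_commutator_eq_zero (ha : ∀ x y : R, a * (x * y - y * x) = 0) (t x y : R) :
    a * (t * (x * y - y * x)) = 0 := by
  calc a * (t * (x * y - y * x))
      = a * (t * (x * y - y * x) - (x * y - y * x) * t) + a * (x * y - y * x) * t := by
        noncomm_ring
    _ = 0 := by rw [ha, ha]; simp

theorem commutator_mul_commutator_eq_zero (ha : ∀ x y : R, a * (x * y - y * x) = 0) (x t : R) :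
    (x * a - a * x) * t * (x * a - a * x) = 0 := by
  calc (x * a - a * x) * t * (x * a - a * x)
      = x * (a * (t * (x * a - a * x))) - a * (x * t * (x * a - a * x)) := by noncomm_ring
    _ = 0 := by rw [mul_mul_commutator_eq_zero ha, mul_mul_commutator_eq_zero ha]; simp

theorem commutator_eq_zero_of_mul_commutator_eq_zero
    (hsemi : ∀ b : R, (∀ r : R, b * r * b = 0) → b = 0)
    (ha : ∀ x y : R, a * (x * y - y * x) = 0) (x : R) :
    x * a - a * x = 0 :=
  hsemi _ (commutator_mul_commutator_eq_zero ha x)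

end

theorem stmt_3_general {R : Type*} [Ring R]
    (hsemi : ∀ a : R, (∀ r : R, a * r * a = 0) → a = 0)
    (d : R → R)
    (h : ∀ r x y : R, d r * (x * y - y * x) = 0) :
    ∀ x r : R, x * d r - d r * x = 0 :=
  fun x r => commutator_eq_zero_of_mul_commutator_eq_zero hsemi (h r) x

theorem stmt_3 {R : Type*} [Ring R]
    (hsemi : ∀ a : R, (∀ r : R, a * r * a = 0) → a = 0)
    (d : R → R) (hadd : ∀ x y : R, d (x + y) = d x + d y)
    (hleib : ∀ x y : R, d (x * y) = d x * y + x * d y)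
    (h : ∀ r x y : R, d r * (x * y - y * x) = 0) :
    ∀ x r : R, x * d r - d r * x = 0 :=
  stmt_3_general hsemi d h
end

section
/- Let V be a vector space over a field C with dim_C V ≥ 2, and let R be a dense subring of linear transformations of V (e.g., R = End_C(V) if V is finite dimensional). Let a ∈ R satisfy ([a,x]y + x[a,y])^n = [a,x]^n [a,y]^n for all x, y in R and a fixed integer n ≥ 1. Then for every v ∈ V, the vectors v and av are linearly dependent over C. -/
/-!
Putting `y = 1` in the identity kills its right-hand side, so every commutator `[a, x]` is
nilpotent. If `v` and `a v` were linearly independent, density would give `x` with `x v = 0`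
and `x (a v) = v`; then `[a, x] v = -v`, and a nilpotent map cannot have the eigenvalue `-1`.
-/

theorem isNilpotent_commutator_of_pow_identity {A : Type*} [Ring A] {a : A} {n : ℕ}
    (hn : n ≠ 0)
    (hid : ∀ x y : A, ((a * x - x * a) * y + x * (a * y - y * a)) ^ n =
      (a * x - x * a) ^ n * (a * y - y * a) ^ n)
    (x : A) : IsNilpotent (a * x - x * a) :=
  ⟨n, by simpa [zero_pow hn] using hid x 1⟩

theorem LinearIndependent.exists_linearMap_apply_eq {K V W ι : Type*} [Field K]
    [AddCommGroup V] [Module K V] [AddCommGroup W] [Module K W] {v : ι → V}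
    (hv : LinearIndependent K v) (w : ι → W) : ∃ f : V →ₗ[K] W, ∀ i, f (v i) = w i := by
  let B := Module.Basis.span hv
  obtain ⟨f, hf⟩ := LinearMap.exists_extend (B.constr K w)
  refine ⟨f, fun i => ?_⟩
  have hBi : ((B i : Submodule.span K (Set.range v)) : V) = v i := by
    simp [B, Module.Basis.span_apply]
  rw [← hBi, ← Submodule.subtype_apply, ← LinearMap.comp_apply, hf, Module.Basis.constr_basis]

theorem Module.End.exists_commutator_apply_eq_neg {K V : Type*} [Field K] [AddCommGroup V]
    [Module K V] (a : Module.End K V) {v : V} (hv : LinearIndependent K ![v, a v]) :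
    ∃ x : Module.End K V, (a * x - x * a) v = -v := by
  obtain ⟨x, hx⟩ := hv.exists_linearMap_apply_eq ![0, v]
  have hxv : x v = 0 := by simpa using hx 0
  have hxav : x (a v) = v := by simpa using hx 1
  exact ⟨x, by simp [hxv, hxav]⟩

theorem Module.End.eq_zero_of_isNilpotent_of_apply_eq_smul {K V : Type*} [Field K]
    [AddCommGroup V] [Module K V] {f : Module.End K V} (hf : IsNilpotent f) {μ : K} {v : V}
    (hv : v ≠ 0) (hfv : f v = μ • v) : μ = 0 :=
  (Module.End.hasEigenvalue_of_hasEigenvector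
    (Module.End.hasEigenvector_iff.mpr ⟨Module.End.mem_eigenspace_iff.mpr hfv, hv⟩)
    |>.isNilpotent_of_isNilpotent hf).eq_zero

theorem stmt_10_general {C V : Type*} [Field C] [AddCommGroup V] [Module C V]
    (a : Module.End C V) (n : ℕ) (hn : 1 ≤ n)
    (hid : ∀ x y : Module.End C V,
      ((a * x - x * a) * y + x * (a * y - y * a)) ^ n =
        (a * x - x * a) ^ n * (a * y - y * a) ^ n) :
    ∀ v : V, ¬ LinearIndependent C ![v, a v] := by
  intro v hv
  obtain ⟨x, hx⟩ := a.exists_commutator_apply_eq_neg hv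
  have hnil := isNilpotent_commutator_of_pow_identity (by omega) hid x
  have hv0 : v ≠ 0 := by simpa using hv.ne_zero 0
  exact neg_ne_zero.mpr one_ne_zero <|
    Module.End.eq_zero_of_isNilpotent_of_apply_eq_smul hnil hv0 (by rw [hx, neg_one_smul])

theorem stmt_10 {C V : Type*} [Field C] [AddCommGroup V] [Module C V]
    [FiniteDimensional C V] (hdim : 2 ≤ Module.finrank C V)
    (a : Module.End C V) (n : ℕ) (hn : 1 ≤ n)
    (hid : ∀ x y : Module.End C V,
      ((a * x - x * a) * y + x * (a * y - y * a)) ^ n =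
        (a * x - x * a) ^ n * (a * y - y * a) ^ n) :
    ∀ v : V, ¬ LinearIndependent C ![v, a v] :=
  stmt_10_general a n hn hid
end

section
/- Let F be a field, V a finite-dimensional F-vector space with dim V ≥ 2, and R = End_F(V). Suppose a ∈ R satisfies ([a,x]y + x[a,y])^n = [a,x]^n [a,y]^n for all x, y ∈ R, for a fixed integer n ≥ 1. Then a is a scalar multiple of the identity. -/
/-
Putting `y = 1` turns the identity into `[a,x]^n = 0`, so every commutator `[a,x]` is nilpotent.
If `a` were not scalar, some `v` would have `v, a v` linearly independent; a map `x` with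
`x v = 0` and `x (a v) = v` then gives `[a,x] v = -v`, so `[a,x]` has the eigenvalue `-1`
and cannot be nilpotent.
-/

open Module Module.End Submodule

namespace Module.End

variable {F V : Type*} [Field F] [AddCommGroup V] [Module F V]

theorem exists_apply_eq_zero_apply_eq {v w : V} (hw : w ∉ span F {v}) (u : V) :
    ∃ x : End F V, x v = 0 ∧ x w = u := by
  obtain ⟨x, hx, hxw⟩ := LinearMap.exists_extend_of_notMem (0 : span F {v} →ₗ[F] V) hw u
  exact ⟨x, by simpa using congr($hx ⟨v, mem_span_singleton_self v⟩), hxw⟩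

theorem exists_eq_smul_one_of_forall_isNilpotent_commutator {a : End F V}
    (h : ∀ x : End F V, IsNilpotent (a * x - x * a)) : ∃ α : F, a = α • 1 := by
  refine LinearMap.exists_eq_smul_id_of_forall_notLinearIndependent fun v hind => ?_
  have hv : v ≠ 0 := hind.ne_zero 0
  have hav : a v ∉ span F {v} := by
    simpa [mem_span_singleton] using (LinearIndependent.pair_iff' hv).mp hind
  obtain ⟨x, hxv, hxav⟩ := exists_apply_eq_zero_apply_eq hav v
  have heig : (a * x - x * a).HasEigenvector (-1) v :=
    ⟨by simp [hxv, hxav], hv⟩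
  exact not_isNilpotent_neg_one
    ((hasEigenvalue_of_hasEigenvector heig).isNilpotent_of_isNilpotent (h x))

end Module.End

theorem stmt_13_general {F V : Type*} [Field F] [AddCommGroup V] [Module F V]
    (a : Module.End F V) (n : ℕ) (hn : 1 ≤ n)
    (hid : ∀ x y : Module.End F V,
      ((a * x - x * a) * y + x * (a * y - y * a)) ^ n =
        (a * x - x * a) ^ n * (a * y - y * a) ^ n) :
    ∃ α : F, a = α • (1 : Module.End F V) := by
  have hcomm : ∀ x : Module.End F V, (a * x - x * a) ^ n = 0 := fun x => by
    simpa [zero_pow (Nat.one_le_iff_ne_zero.mp hn)] using hid x 1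
  exact exists_eq_smul_one_of_forall_isNilpotent_commutator fun x => ⟨n, hcomm x⟩

theorem stmt_13 {F V : Type*} [Field F] [AddCommGroup V] [Module F V]
    [FiniteDimensional F V] (hdim : 2 ≤ Module.finrank F V)
    (a : Module.End F V) (n : ℕ) (hn : 1 ≤ n)
    (hid : ∀ x y : Module.End F V,
      ((a * x - x * a) * y + x * (a * y - y * a)) ^ n =
        (a * x - x * a) ^ n * (a * y - y * a) ^ n) :
    ∃ α : F, a = α • (1 : Module.End F V) :=
  stmt_13_general a n hn hid
end

section
/- Let R = M_k(F) for a field F and k ≥ 2, and let d be the inner derivation d(x) = [a, x] for some a ∈ M_k(F). If (d(xy))^n = (d(x))^n (d(y))^n for all x, y ∈ M_k(F) and a fixed n ≥ 1, then d = 0. -/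
/-!
Taking `y = 1` shows that every commutator `[a, x]` is nilpotent. For a nonzero vector `u` and any
`w` with `w ⬝ u = 0`, the commutator of `a` with the rank-one matrix `u wᵀ` sends `u` to
`-(w ⬝ a u) • u`; a nilpotent matrix has no nonzero eigenvalue, so `w ⬝ a u = 0`. Testing this on
the pairs `(e_j, e_i)` and `(e_i + e_j, e_i - e_j)` shows that `a` is scalar, hence central.
-/

open Matrix

namespace Matrix

variable {n R : Type*} [Fintype n] [DecidableEq n] [CommRing R] [IsDomain R]
theorem eq_zero_of_isNilpotent_of_mulVec_eq_smul {M : Matrix n n R} (hM : IsNilpotent M)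
    {v : n → R} (hv : v ≠ 0) {c : R} (hMv : M *ᵥ v = c • v) : c = 0 := by
  have hpow : ∀ m : ℕ, (M ^ m) *ᵥ v = c ^ m • v := by
    intro m
    induction m with
    | zero => simp
    | succ m ih => rw [pow_succ, ← mulVec_mulVec, hMv, mulVec_smul, ih, smul_smul, pow_succ']
  obtain ⟨m, hm⟩ := hM
  have hcm : c ^ m • v = 0 := by rw [← hpow, hm, zero_mulVec]
  exact eq_zero_of_pow_eq_zero ((smul_eq_zero.mp hcm).resolve_right hv)

theorem dotProduct_mulVec_eq_zero_of_isNilpotent_commutator {a : Matrix n n R}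
    (ha : ∀ x, IsNilpotent (a * x - x * a)) {u w : n → R} (hwu : w ⬝ᵥ u = 0) :
    w ⬝ᵥ (a *ᵥ u) = 0 := by
  rcases eq_or_ne u 0 with rfl | hu
  · simp
  have hu_eigen : (a * vecMulVec u w - vecMulVec u w * a) *ᵥ u = -(w ⬝ᵥ (a *ᵥ u)) • u := by
    rw [sub_mulVec, ← mulVec_mulVec, ← mulVec_mulVec, vecMulVec_mulVec, vecMulVec_mulVec,
      hwu, op_smul_eq_smul, op_smul_eq_smul, zero_smul, mulVec_zero, zero_sub, neg_smul]
  exact neg_eq_zero.mp (eq_zero_of_isNilpotent_of_mulVec_eq_smul (ha _) hu hu_eigen)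

theorem mem_range_scalar_of_forall_isNilpotent_commutator {a : Matrix n n R}
    (ha : ∀ x, IsNilpotent (a * x - x * a)) : a ∈ Set.range (scalar n) := by
  have hoff : ∀ i j, i ≠ j → a i j = 0 := by
    intro i j hij
    simpa [dotProduct_single_one, mulVec_single_one, hij] using
      dotProduct_mulVec_eq_zero_of_isNilpotent_commutator ha
        (u := Pi.single j 1) (w := Pi.single i 1) (by simp [hij])
  have hdiag : ∀ i j, i ≠ j → a i i = a j j := by
    intro i j hij
    have horth := dotProduct_mulVec_eq_zero_of_isNilpotent_commutator ha
        (u := Pi.single i 1 + Pi.single j 1) (w := Pi.single i 1 - Pi.single j 1)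
        (by simp [hij, hij.symm])
    simp only [mulVec_add, mulVec_single, MulOpposite.op_one, one_smul, dotProduct_add,
      sub_dotProduct, single_dotProduct, col_apply, one_mul, hoff j i hij.symm, mul_zero, sub_zero,
      hoff i j hij, zero_sub] at horth
    linear_combination horth
  refine mem_range_scalar_of_commute_single fun i j hij => ?_
  ext p q
  rcases eq_or_ne p i with rfl | hpi <;> rcases eq_or_ne q j with rfl | hqj
  · rw [single_mul_apply_same, mul_single_apply_same, one_mul, mul_one]
    exact (hdiag _ _ hij).symm
  · rw [single_mul_apply_same, mul_single_apply_of_ne (hbj := hqj), one_mul]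
    exact hoff _ _ hqj.symm
  · rw [single_mul_apply_of_ne (h := hpi), mul_single_apply_same, mul_one]
    exact (hoff _ _ hpi).symm
  · rw [single_mul_apply_of_ne (h := hpi), mul_single_apply_of_ne (hbj := hqj)]

end Matrix

theorem stmt_14_general {F : Type*} [Field F] (k : ℕ)
    (a : Matrix (Fin k) (Fin k) F)
    (d : Matrix (Fin k) (Fin k) F → Matrix (Fin k) (Fin k) F)
    (hd : ∀ x, d x = a * x - x * a)
    (n : ℕ) (hn : 1 ≤ n)
    (hid : ∀ x y : Matrix (Fin k) (Fin k) F,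
      (d (x * y)) ^ n = (d x) ^ n * (d y) ^ n) :
    ∀ x, d x = 0 := by
  have hnil : ∀ x, IsNilpotent (a * x - x * a) := fun x =>
    ⟨n, by simpa [hd, zero_pow (by omega : n ≠ 0)] using hid x 1⟩
  obtain ⟨r, rfl⟩ := mem_range_scalar_of_forall_isNilpotent_commutator hnil
  intro x
  rw [hd, sub_eq_zero]
  exact scalar_commute r (Commute.all r) x

theorem stmt_14 {F : Type*} [Field F] (k : ℕ) (hk : 2 ≤ k)
    (a : Matrix (Fin k) (Fin k) F)
    (d : Matrix (Fin k) (Fin k) F → Matrix (Fin k) (Fin k) F)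
    (hd : ∀ x, d x = a * x - x * a)
    (n : ℕ) (hn : 1 ≤ n)
    (hid : ∀ x y : Matrix (Fin k) (Fin k) F,
      (d (x * y)) ^ n = (d x) ^ n * (d y) ^ n) :
    ∀ x, d x = 0 :=
  stmt_14_general k a d hd n hn hid
end

section
/- Let R be a semiprime ring and d a derivation of R such that d(R)[R,R] = 0 (i.e., d(r)[x,y] = 0 for all r, x, y ∈ R). Then [R, d(R)] R [R, d(R)] = 0, i.e., [x, d(r)] s [y, d(t)] = 0 for all x, y, s, r, t ∈ R. -/
section Leibniz

variable {R : Type*} [NonUnitalRing R] {d : R → R}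

theorem leibniz_mul_mul_commutator_eq_zero (hleib : ∀ x y : R, d (x * y) = d x * y + x * d y)
    (h : ∀ r x y : R, d r * (x * y - y * x) = 0) (a b x y : R) :
    d a * b * (x * y - y * x) = 0 := by
  have hab := h (a * b) x y
  rwa [hleib, add_mul, mul_assoc a, h b x y, mul_zero, add_zero] at hab

theorem commutator_mul_mul_eq_zero_of_forall_mul_mul_eq_zero {c : R}
    (hc : ∀ a b : R, d a * b * c = 0) (x r s : R) :
    (x * d r - d r * x) * s * c = 0 := by
  calc (x * d r - d r * x) * s * c = x * (d r * s * c) - d r * (x * s) * c := by noncomm_ring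
    _ = 0 := by rw [hc, hc, mul_zero, sub_zero]

end Leibniz

theorem stmt_16_general {R : Type*} [Ring R]
    (d : R → R)
    (hleib : ∀ x y : R, d (x * y) = d x * y + x * d y)
    (h : ∀ r x y : R, d r * (x * y - y * x) = 0) :
    ∀ x r s y t : R, (x * d r - d r * x) * s * (y * d t - d t * y) = 0 :=
  fun x r s y t => commutator_mul_mul_eq_zero_of_forall_mul_mul_eq_zero
    (fun a b => leibniz_mul_mul_commutator_eq_zero hleib h a b y (d t)) x r s

theorem stmt_16 {R : Type*} [Ring R]
    (hsemi : ∀ a : R, (∀ r : R, a * r * a = 0) → a = 0)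
    (d : R → R) (hadd : ∀ x y : R, d (x + y) = d x + d y)
    (hleib : ∀ x y : R, d (x * y) = d x * y + x * d y)
    (h : ∀ r x y : R, d r * (x * y - y * x) = 0) :
    ∀ x r s y t : R, (x * d r - d r * x) * s * (y * d t - d t * y) = 0 :=
  stmt_16_general d hleib h
end

section
/- Let R be a prime ring and a ∈ R such that ([a,x]y + x[a,y])^n = [a,x]^n [a,y]^n for all x, y ∈ R and a fixed integer n ≥ 1. Then R is commutative or a lies in the extended centroid (in particular, if R is a simple unital algebra, a is central in R). -/
/-!
Taking `y = 1` gives `[a, x] ^ n = 0` for every `x`, so it suffices to show (after Herstein) that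
in a simple ring an element all of whose commutators are nilpotent is central. Let `V` be a simple
`R`-module; it is faithful because `R` is simple, and `R` acts on it by linear maps over the division
ring `D = End_R V`. If `x • w = 0` but `x • a • w ≠ 0`, some `z` kills `w` and sends `a • w` to `w`,
so `([a, z] + 1) • w = 0`, which is impossible because `[a, z] + 1` is a unit. Hence
`a • w ∈ D • w` for every `w`. If `dim_D V ≠ 1`, a `D`-linear map having every vector as an
eigenvector is a homothety with central ratio, so `a` commutes with `R` on `V`; if `dim_D V = 1`,
then `End_D V` is a division ring, in which the nilpotent `[a, r]` must act as zero.
-/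

open Module

namespace IsSimpleModule

variable {R V : Type*} [Ring R] [AddCommGroup V] [Module R V] [IsSimpleModule R V]

theorem smul_smul_eq_zero_of_smul_eq_zero {a : R}
    (ha : ∀ y : R, IsNilpotent (a * y - y * a)) {x : R} {w : V} (hxw : x • w = 0) :
    x • a • w = 0 := by
  by_contra h
  obtain ⟨y, hy⟩ := toSpanSingleton_surjective R h w
  rw [LinearMap.toSpanSingleton_apply] at hy
  set z := y * x
  have hzw : (a * z - z * a + 1) • w = 0 := by
    rw [add_smul, sub_smul, mul_smul, mul_smul, mul_smul, hxw, mul_smul, hy]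
    simp
  have hw : w = 0 := ((ha z).isUnit_add_one.smul_eq_zero).mp hzw
  exact h (by rw [hw, smul_zero, smul_zero])

theorem exists_end_apply_eq_smul {a : R} (ha : ∀ y : R, IsNilpotent (a * y - y * a)) (w : V) :
    ∃ f : Module.End R V, f w = a • w := by
  rcases eq_or_ne w 0 with rfl | hw
  · exact ⟨0, by simp⟩
  have hsurj := toSpanSingleton_surjective R hw
  have hker : LinearMap.ker (LinearMap.toSpanSingleton R V w) ≤
      LinearMap.ker (LinearMap.toSpanSingleton R V (a • w)) := fun x hx ↦
    smul_smul_eq_zero_of_smul_eq_zero ha hx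
  refine ⟨(LinearMap.ker _).liftQ _ hker ∘ₗ
    ((LinearMap.toSpanSingleton R V w).quotKerEquivOfSurjective hsurj).symm, ?_⟩
  have hw_mk := LinearMap.quotKerEquivOfSurjective_symm_apply
    (f := LinearMap.toSpanSingleton R V w) hsurj 1
  simp only [LinearMap.toSpanSingleton_apply, one_smul] at hw_mk
  simp [hw_mk]

theorem smul_smul_comm_of_finrank_ne_one (hV : finrank (Module.End R V) V ≠ 1) {a : R}
    (ha : ∀ v : V, ∃ f : Module.End R V, f v = a • v) (r : R) (v : V) :
    a • r • v = r • a • v := by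
  classical
  obtain ⟨c, hc⟩ := LinearMap.exists_mem_center_apply_eq_smul_of_forall_notLinearIndependent
    (f := Module.toModuleEnd (Module.End R V) (S := R) V a) hV fun v ↦ by
      obtain ⟨f, hf⟩ := ha v
      rw [LinearIndependent.pair_iff]
      exact fun h ↦ by simpa using (h f (-1) (by simp [hf])).2
  have hac (u : V) : a • u = (c : Module.End R V) u := by
    simpa [Subring.smul_def] using congr($hc u)
  rw [hac, hac, LinearMap.map_smul]

theorem smul_eq_zero_of_isNilpotent (hV : finrank (Module.End R V) V = 1) {b : R}
    (hb : IsNilpotent b) (v : V) : b • v = 0 := by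
  classical
  have := isSimpleModule_iff_finrank_eq_one.mpr hV
  have hb_end : Module.toModuleEnd (Module.End R V) (S := R) V b = 0 :=
    (hb.map (Module.toModuleEnd (Module.End R V) (S := R) V)).eq_zero
  simpa using congr($hb_end v)

theorem smul_smul_comm_of_isNilpotent_commutator {a : R}
    (ha : ∀ y : R, IsNilpotent (a * y - y * a)) (r : R) (v : V) :
    a • r • v = r • a • v := by
  by_cases hV : finrank (Module.End R V) V = 1
  · rw [← sub_eq_zero, ← mul_smul, ← mul_smul, ← sub_smul]
    exact smul_eq_zero_of_isNilpotent hV (ha r) v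
  · exact smul_smul_comm_of_finrank_ne_one hV (exists_end_apply_eq_smul ha) r v

end IsSimpleModule

theorem IsSimpleRing.commute_of_isNilpotent_commutator {R : Type*} [Ring R] [IsSimpleRing R]
    {a : R} (ha : ∀ y : R, IsNilpotent (a * y - y * a)) (r : R) : Commute a r := by
  obtain ⟨M, hM⟩ := Ideal.exists_maximal R
  have : IsSimpleModule R (R ⧸ M) := isSimpleModule_iff_isCoatom.mpr hM.out
  have := IsSimpleModule.nontrivial R (R ⧸ M)
  refine (Module.toModuleEnd (Module.End R (R ⧸ M)) (S := R) (R ⧸ M)).injective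
    (LinearMap.ext fun v ↦ ?_)
  simpa only [Module.toModuleEnd_apply, DistribSMul.toLinearMap_apply, mul_smul] using
    IsSimpleModule.smul_smul_comm_of_isNilpotent_commutator ha r v

theorem stmt_19 {R : Type*} [Ring R] [IsSimpleRing R]
    (a : R) (n : ℕ) (hn : 1 ≤ n)
    (hid : ∀ x y : R,
      ((a * x - x * a) * y + x * (a * y - y * a)) ^ n =
        (a * x - x * a) ^ n * (a * y - y * a) ^ n) :
    (∀ x y : R, x * y = y * x) ∨ (∀ r : R, a * r = r * a) := by
  refine .inr (IsSimpleRing.commute_of_isNilpotent_commutator fun x ↦ ⟨n, ?_⟩)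
  simpa [zero_pow (Nat.one_le_iff_ne_zero.mp hn)] using hid x 1
end
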